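/- If γ ⊆ Î is a flat closed arc with π_ℓ(γ) = I for some ℓ ≥ 0, then the length of γ is at least (2s/(2s − 1))·s^ℓ. -/

import Mathlib

/-!
Parametrise `γ` by `[0,1]` and let `Gᵢ` be its `i`-th coordinate, so that `f ∘ Gᵢ₊₁ = Gᵢ`.
Since `f` has slope `±s` on each side of `c`, composing a continuous path with `f` multiplies its
total variation by at least `s`: split every step of a partition at a time where the path meets
`c`. As `G_ℓ` runs from `0` to `1`, the variation of `G₀ = f^ℓ ∘ G_ℓ` is at least `s^ℓ`.
On the other hand `fⁱ` is `sⁱ`-Lipschitz, so `|x₀ - y₀| ≤ sⁱ |xᵢ - yᵢ|` and summing against `2⁻ⁱ`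
gives `d(x, y) ≥ 2s/(2s-1) · |x₀ - y₀|`; hence the length of `γ` is at least `2s/(2s-1)` times
the variation of `G₀`.
-/

open Set MeasureTheory ENNReal Topology

noncomputable section

namespace Tent

/-- The core interval `I = [0,1]`. -/
def I : Set ℝ := Set.Icc 0 1

/-- The core tent map of slope `s`, `f(x) = min(s·x + 2 − s, s·(1 − x))`. -/
def f (s : ℝ) (x : ℝ) : ℝ := min (s * x + 2 - s) (s * (1 - x))

/-- The critical point `c = 1 − 1/s`. -/
def c (s : ℝ) : ℝ := 1 - 1 / s

/-- The post-critical set `PC = {c, f(c), f²(c), …}`. -/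
def PC (s : ℝ) : Set ℝ := Set.range fun n => (f s)^[n] (c s)

/-- The inverse limit, as a set of sequences: `x_i ∈ I` and `f(x_{i+1}) = x_i`. -/
def IhatSet (s : ℝ) : Set (ℕ → ℝ) :=
  {x | (∀ i, x i ∈ I) ∧ ∀ i, f s (x (i + 1)) = x i}

/-- The inverse limit space `Î`. -/
abbrev Ihat (s : ℝ) : Type := ↥(IhatSet s)

/-- The metric on `Î`: `d(x,y) = Σ_i |x_i − y_i|/2^i`. -/
def dHat (s : ℝ) (x y : Ihat s) : ℝ := ∑' i : ℕ, |x.1 i - y.1 i| / 2 ^ i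

/-- The shift map on sequences: `x ↦ (f(x₀), x₀, x₁, …)`. -/
def fhatSeq (s : ℝ) (x : ℕ → ℝ) : ℕ → ℝ := fun n => Nat.casesOn n (f s (x 0)) fun k => x k

/-- The image under `f̂ⁿ` of a subset of `Î`. -/
def fhatImage (s : ℝ) (n : ℕ) (K : Set (Ihat s)) : Set (Ihat s) :=
  {y : Ihat s | ∃ x ∈ K, y.1 = (fhatSeq s)^[n] (Subtype.val x)}

/-- The inverse `f̂⁻ⁿ` of the shift homeomorphism: drop the first `n` coordinates. -/
def fhatInv (s : ℝ) (n : ℕ) (x : Ihat s) : Ihat s :=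
  ⟨fun i => x.1 (i + n), fun i => x.2.1 (i + n), fun i => by
    show f s (x.1 (i + 1 + n)) = x.1 (i + n)
    rw [show i + 1 + n = i + n + 1 from by omega]
    exact x.2.2 (i + n)⟩

/-- `γ` is an arc in `Î`: homeomorphic to a nontrivial interval of `ℝ`. -/
def IsArc (s : ℝ) (γ : Set (Ihat s)) : Prop :=
  ∃ J : Set ℝ, J.OrdConnected ∧ J.Nontrivial ∧ Nonempty (γ ≃ₜ J)

/-- `γ` is a closed arc in `Î`: homeomorphic to `[0,1]`. -/
def IsClosedArc (s : ℝ) (γ : Set (Ihat s)) : Prop := Nonempty (γ ≃ₜ (Set.Icc (0:ℝ) 1))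

/-- `γ` is an open arc in `Î`: homeomorphic to `(0,1)`. -/
def IsOpenArc (s : ℝ) (γ : Set (Ihat s)) : Prop := Nonempty (γ ≃ₜ (Set.Ioo (0:ℝ) 1))

/-- `x` is an endpoint of the closed arc `γ`. -/
def IsEndpoint (s : ℝ) (x : Ihat s) (γ : Set (Ihat s)) : Prop :=
  ∃ (e : γ ≃ₜ (Set.Icc (0:ℝ) 1)) (hx : x ∈ γ), (e ⟨x, hx⟩).1 = 0 ∨ (e ⟨x, hx⟩).1 = 1

/-- `γ` is `m`-flat over the nontrivial interval `J ⊆ I`: the projection `π_m`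
restricted to `γ` is a homeomorphism onto `J`. -/
def MFlatOver (s : ℝ) (m : ℕ) (γ : Set (Ihat s)) (J : Set ℝ) : Prop :=
  J ⊆ I ∧ J.OrdConnected ∧ J.Nontrivial ∧
    ∃ e : γ ≃ₜ J, ∀ x : γ, (e x).1 = x.1.1 m

/-- `γ` is an `m`-flat arc. -/
def IsMFlat (s : ℝ) (m : ℕ) (γ : Set (Ihat s)) : Prop := ∃ J : Set ℝ, MFlatOver s m γ J

/-- `γ` is a flat arc: `m`-flat for some `m ≥ 0`. -/
def IsFlat (s : ℝ) (γ : Set (Ihat s)) : Prop := ∃ m : ℕ, IsMFlat s m γ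

/-- `γ` is a flat closed arc. -/
def IsFlatClosedArc (s : ℝ) (γ : Set (Ihat s)) : Prop := IsClosedArc s γ ∧ IsFlat s γ

/-- `p 0, …, p k` occur in order along the closed arc `γ` (from one endpoint to the other). -/
def InOrderAlong (s : ℝ) (γ : Set (Ihat s)) (k : ℕ) (p : ℕ → Ihat s) : Prop :=
  ∃ (e : γ ≃ₜ (Set.Icc (0:ℝ) 1)) (t : ℕ → Set.Icc (0:ℝ) 1),
    (∀ i j, i ≤ j → j ≤ k → t i ≤ t j) ∧ ∀ i ≤ k, (e.symm (t i)).1 = p i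

/-- The arclength of a closed arc `γ` in the metric `d`: the supremum over finite
sequences of points occurring in order along `γ` of the sums of successive distances. -/
def arcLength (s : ℝ) (γ : Set (Ihat s)) : ℝ≥0∞ :=
  ⨆ (k : ℕ) (p : ℕ → Ihat s) (_ : InOrderAlong s γ k p),
    ENNReal.ofReal (∑ i ∈ Finset.range k, dHat s (p i) (p (i + 1)))

/-- A continuum: a compact connected subset of `Î` with more than one point. -/
def IsContinuum (s : ℝ) (K : Set (Ihat s)) : Prop :=
  IsCompact K ∧ IsConnected K ∧ K.Nontrivial

/-- `K` is `ε`-dense in `Î`. -/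
def EpsDense (s : ℝ) (ε : ℝ) (K : Set (Ihat s)) : Prop :=
  ∀ x : Ihat s, ∃ y ∈ K, dHat s x y ≤ ε

/-- `S` is metrically infinite: contains flat closed arcs of arbitrarily large length. -/
def MetricallyInfinite (s : ℝ) (S : Set (Ihat s)) : Prop :=
  ∀ N : ℝ, 0 < N → ∃ γ : Set (Ihat s), γ ⊆ S ∧ IsFlatClosedArc s γ ∧
    ENNReal.ofReal N < arcLength s γ

/-- An arc is bi-dense if, for some point `p` in it, both connected components of
`γ ∖ {p}` are dense in `Î`. -/
def BiDense (s : ℝ) (γ : Set (Ihat s)) : Prop :=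
  ∃ p ∈ γ, ∀ q ∈ γ \ {p}, Dense (connectedComponentIn (γ \ {p}) q)

/-- An arc is metrically bi-infinite if, for some point `p` in it, both connected
components of `γ ∖ {p}` are metrically infinite. -/
def MetricallyBiInfinite (s : ℝ) (γ : Set (Ihat s)) : Prop :=
  ∃ p ∈ γ, ∀ q ∈ γ \ {p}, MetricallyInfinite s (connectedComponentIn (γ \ {p}) q)

/-- `x` is globally leaf regular: its path component is a bi-dense, metrically
bi-infinite open arc. -/
def GloballyLeafRegular (s : ℝ) (x : Ihat s) : Prop :=
  IsOpenArc s (pathComponent x) ∧ BiDense s (pathComponent x) ∧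
    MetricallyBiInfinite s (pathComponent x)

/-- A `0`-box over `J`: a union of arcs, each `0`-flat over `J`. -/
def ZeroBoxOver (s : ℝ) (B : Set (Ihat s)) (J : Set ℝ) : Prop :=
  ∃ A : Set (Set (Ihat s)), (∀ γ ∈ A, MFlatOver s 0 γ J) ∧ B = ⋃₀ A

/-- An `m`-box over `J`: `f̂⁻ᵐ(B)` is a `0`-box over `J`. -/
def MBoxOver (s : ℝ) (m : ℕ) (B : Set (Ihat s)) (J : Set ℝ) : Prop :=
  ZeroBoxOver s (fhatInv s m '' B) J

/-- The maximal `m`-box over `J`: the union of all arcs `m`-flat over `J`. -/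
def maximalMBox (s : ℝ) (m : ℕ) (J : Set ℝ) : Set (Ihat s) :=
  ⋃₀ {γ : Set (Ihat s) | MFlatOver s m γ J}

/-- The point cylinder `[y₀, …, y_n]`. -/
def pointCyl (s : ℝ) (y : ℕ → ℝ) (n : ℕ) : Set (Ihat s) :=
  {z : Ihat s | ∀ i ≤ n, z.1 i = y i}

theorem abs_sub_eq_abs_sub_add_abs_sub_of_mem_uIcc {x y z : ℝ} (h : y ∈ uIcc x z) :
    |z - x| = |z - y| + |y - x| := by
  rcases mem_uIcc.1 h with ⟨hxy, hyz⟩ | ⟨hzy, hyx⟩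
  · rw [abs_of_nonneg (by linarith), abs_of_nonneg (by linarith), abs_of_nonneg (by linarith)]
    ring
  · rw [abs_of_nonpos (by linarith), abs_of_nonpos (by linarith), abs_of_nonpos (by linarith)]
    ring

section TentMap

variable {s : ℝ}

theorem continuous_f : Continuous (f s) := by
  unfold f
  fun_prop

theorem f_eq_one_sub_mul_abs (hs : 0 < s) (x : ℝ) : f s x = 1 - s * |x - c s| := by
  have hsc : s * c s = s - 1 := by
    unfold c
    field_simp
  rcases le_total x (c s) with hx | hx
  · rw [abs_of_nonpos (sub_nonpos.2 hx), f, min_eq_left (by nlinarith)]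
    linarith
  · rw [abs_of_nonneg (sub_nonneg.2 hx), f, min_eq_right (by nlinarith)]
    linarith

theorem abs_f_sub_f_le (hs : 0 ≤ s) (x y : ℝ) : |f s x - f s y| ≤ s * |x - y| := by
  have h := abs_min_sub_min_le_max (s * x + 2 - s) (s * (1 - x)) (s * y + 2 - s) (s * (1 - y))
  rwa [show s * x + 2 - s - (s * y + 2 - s) = s * (x - y) by ring,
    show s * (1 - x) - s * (1 - y) = -(s * (x - y)) by ring, abs_neg, max_self, abs_mul,
    abs_of_nonneg hs] at h

theorem abs_iterate_f_sub_le (hs : 0 ≤ s) (n : ℕ) (x y : ℝ) :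
    |(f s)^[n] x - (f s)^[n] y| ≤ s ^ n * |x - y| := by
  induction n with
  | zero => simp
  | succ n ih =>
    rw [Function.iterate_succ_apply', Function.iterate_succ_apply', pow_succ', mul_assoc]
    exact (abs_f_sub_f_le hs _ _).trans (mul_le_mul_of_nonneg_left ih hs)

theorem abs_f_sub_f_c (hs : 0 < s) (x : ℝ) : |f s x - f s (c s)| = s * |x - c s| := by
  rw [f_eq_one_sub_mul_abs hs, f_eq_one_sub_mul_abs hs, sub_self, abs_zero, mul_zero, sub_zero,
    sub_sub_cancel_left, abs_neg, abs_mul, abs_abs, abs_of_pos hs]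

theorem abs_f_sub_f_of_c_notMem_uIcc (hs : 0 < s) {x y : ℝ} (h : c s ∉ uIcc x y) :
    |f s x - f s y| = s * |x - y| := by
  rw [f_eq_one_sub_mul_abs hs, f_eq_one_sub_mul_abs hs,
    show 1 - s * |x - c s| - (1 - s * |y - c s|) = s * (|y - c s| - |x - c s|) by ring, abs_mul,
    abs_of_pos hs]
  simp only [mem_uIcc, not_or, not_and_or, not_le] at h
  rcases lt_or_ge (c s) x with hx | hx
  · have hy : c s < y := by grind
    rw [abs_of_pos (sub_pos.2 hx), abs_of_pos (sub_pos.2 hy), sub_sub_sub_cancel_right,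
      abs_sub_comm]
  · have hx : x < c s := by grind
    have hy : y < c s := by grind
    rw [abs_of_neg (sub_neg.2 hx), abs_of_neg (sub_neg.2 hy), neg_sub_neg,
      sub_sub_sub_cancel_right]

end TentMap

section Variation

variable {α : Type*} [ConditionallyCompleteLinearOrder α] [TopologicalSpace α] [OrderTopology α]
  [DenselyOrdered α] {s : ℝ} {h : α → ℝ}

theorem ofReal_mul_edist_le_eVariationOn_f_comp (hs : 0 < s) {a b : α} (hab : a ≤ b)
    (hh : ContinuousOn h (Icc a b)) :
    ENNReal.ofReal s * edist (h b) (h a) ≤ eVariationOn (f s ∘ h) (Icc a b) := by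
  rw [edist_dist, Real.dist_eq, ← ENNReal.ofReal_mul hs.le]
  by_cases hc : c s ∈ uIcc (h a) (h b)
  · rw [← uIcc_of_le hab] at hh
    obtain ⟨w, hw, hwc⟩ := intermediate_value_uIcc hh hc
    rw [uIcc_of_le hab] at hw
    calc ENNReal.ofReal (s * |h b - h a|)
        = edist ((f s ∘ h) w) ((f s ∘ h) a) + edist ((f s ∘ h) b) ((f s ∘ h) w) := by
          simp only [edist_dist, Real.dist_eq, Function.comp_apply, hwc]
          rw [abs_f_sub_f_c hs, abs_sub_comm (f s (c s)), abs_f_sub_f_c hs,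
            ← ENNReal.ofReal_add (by positivity) (by positivity), ← mul_add, abs_sub_comm (h a),
            add_comm, ← abs_sub_eq_abs_sub_add_abs_sub_of_mem_uIcc hc]
      _ ≤ eVariationOn (f s ∘ h) (Icc a w) + eVariationOn (f s ∘ h) (Icc w b) :=
          add_le_add (eVariationOn.edist_le _ (right_mem_Icc.2 hw.1) (left_mem_Icc.2 hw.1))
            (eVariationOn.edist_le _ (right_mem_Icc.2 hw.2) (left_mem_Icc.2 hw.2))
      _ = eVariationOn (f s ∘ h) (Icc a b) := by
          simpa only [univ_inter] using eVariationOn.Icc_add_Icc (f s ∘ h) (s := univ) hw.1 hw.2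
            (mem_univ w)
  · rw [uIcc_comm] at hc
    rw [← abs_f_sub_f_of_c_notMem_uIcc hs hc, ← Real.dist_eq, ← edist_dist]
    exact eVariationOn.edist_le _ (right_mem_Icc.2 hab) (left_mem_Icc.2 hab)

theorem ofReal_mul_eVariationOn_le_f_comp (hs : 0 < s) {t : Set α} (ht : t.OrdConnected)
    (hh : ContinuousOn h t) :
    ENNReal.ofReal s * eVariationOn h t ≤ eVariationOn (f s ∘ h) t := by
  rw [eVariationOn, ENNReal.mul_iSup]
  refine iSup_le fun ⟨n, u, hu, hut⟩ => ?_
  calc ENNReal.ofReal s * ∑ i ∈ Finset.range n, edist (h (u (i + 1))) (h (u i))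
      ≤ ∑ i ∈ Finset.range n, eVariationOn (f s ∘ h) (univ ∩ Icc (u i) (u (i + 1))) := by
        rw [Finset.mul_sum]
        refine Finset.sum_le_sum fun i _ => ?_
        rw [univ_inter]
        exact ofReal_mul_edist_le_eVariationOn_f_comp hs (hu i.le_succ)
          (hh.mono (ht.out (hut i) (hut (i + 1))))
    _ = eVariationOn (f s ∘ h) (univ ∩ Icc (u 0) (u n)) :=
        eVariationOn.sum _ hu fun i _ _ => mem_univ _
    _ ≤ eVariationOn (f s ∘ h) t := by
        rw [univ_inter]
        exact eVariationOn.mono _ (ht.out (hut 0) (hut n))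

theorem ofReal_pow_mul_eVariationOn_le_iterate_f_comp (hs : 0 < s) {t : Set α}
    (ht : t.OrdConnected) (hh : ContinuousOn h t) (n : ℕ) :
    ENNReal.ofReal (s ^ n) * eVariationOn h t ≤ eVariationOn ((f s)^[n] ∘ h) t := by
  induction n generalizing h with
  | zero => simp
  | succ n ih =>
    calc ENNReal.ofReal (s ^ (n + 1)) * eVariationOn h t
        = ENNReal.ofReal (s ^ n) * (ENNReal.ofReal s * eVariationOn h t) := by
          rw [pow_succ, ENNReal.ofReal_mul (by positivity), mul_assoc]
      _ ≤ ENNReal.ofReal (s ^ n) * eVariationOn (f s ∘ h) t := by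
          gcongr
          exact ofReal_mul_eVariationOn_le_f_comp hs ht hh
      _ ≤ eVariationOn ((f s)^[n + 1] ∘ h) t := by
          rw [Function.iterate_succ, Function.comp_assoc]
          exact ih (continuous_f.comp_continuousOn hh)

end Variation

section InverseLimit

variable {s : ℝ}

theorem iterate_f_coord (x : Ihat s) (i : ℕ) : (f s)^[i] (x.1 i) = x.1 0 := by
  induction i with
  | zero => rfl
  | succ i ih => rw [Function.iterate_succ_apply, x.2.2 i, ih]

theorem summable_abs_sub_coord_div_two_pow (x y : Ihat s) :
    Summable fun i => |x.1 i - y.1 i| / 2 ^ i := by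
  refine summable_geometric_two.of_nonneg_of_le (fun i => by positivity) fun i => ?_
  have hx : x.1 i ∈ Icc (0 : ℝ) 1 := x.2.1 i
  have hy : y.1 i ∈ Icc (0 : ℝ) 1 := y.2.1 i
  rw [one_div_pow]
  gcongr
  exact abs_sub_le_iff.2 ⟨by linarith [hx.2, hy.1], by linarith [hx.1, hy.2]⟩

theorem mul_abs_sub_coord_zero_le_dHat (hs : 1 / 2 < s) (x y : Ihat s) :
    2 * s / (2 * s - 1) * |x.1 0 - y.1 0| ≤ dHat s x y := by
  have hs₀ : 0 < s := by linarith
  have hr : (2 * s)⁻¹ < 1 := inv_lt_one_of_one_lt₀ (by linarith)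
  calc 2 * s / (2 * s - 1) * |x.1 0 - y.1 0|
      = ∑' i : ℕ, |x.1 0 - y.1 0| * (2 * s)⁻¹ ^ i := by
        rw [tsum_mul_left, tsum_geometric_of_lt_one (by positivity) hr]
        field_simp
    _ ≤ ∑' i : ℕ, |x.1 i - y.1 i| / 2 ^ i := by
        refine Summable.tsum_le_tsum (fun i => ?_)
          ((summable_geometric_of_lt_one (by positivity) hr).mul_left _)
          (summable_abs_sub_coord_div_two_pow x y)
        have hlip := abs_iterate_f_sub_le hs₀.le i (x.1 i) (y.1 i)
        rw [iterate_f_coord, iterate_f_coord] at hlip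
        rw [inv_pow, mul_pow, ← div_eq_mul_inv, mul_comm (2 ^ i), ← div_div]
        gcongr
        rwa [div_le_iff₀' (by positivity)]

theorem dHat_nonneg (x y : Ihat s) : 0 ≤ dHat s x y :=
  tsum_nonneg fun _ => by positivity

end InverseLimit

theorem ofReal_mul_eVariationOn_le_arcLength {s C : ℝ} {γ : Set (Ihat s)}
    (e : γ ≃ₜ Icc (0 : ℝ) 1) {φ : Ihat s → ℝ} (hφ : ∀ x y, C * |φ x - φ y| ≤ dHat s x y) :
    ENNReal.ofReal C * eVariationOn (fun t => φ (e.symm t)) univ ≤ arcLength s γ := by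
  rw [eVariationOn, ENNReal.mul_iSup]
  refine iSup_le fun ⟨n, u, hu, _⟩ => ?_
  set p : ℕ → Ihat s := fun i => (e.symm (u i)).1
  have hp : InOrderAlong s γ n p := ⟨e, u, fun _ _ hij _ => hu hij, fun _ _ => rfl⟩
  calc ENNReal.ofReal C * ∑ i ∈ Finset.range n, edist (φ (p (i + 1))) (φ (p i))
      ≤ ENNReal.ofReal (∑ i ∈ Finset.range n, dHat s (p i) (p (i + 1))) := by
        rw [Finset.mul_sum,
          ENNReal.ofReal_sum_of_nonneg fun i _ => dHat_nonneg (p i) (p (i + 1))]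
        gcongr with i
        rw [edist_dist, Real.dist_eq, abs_sub_comm, ← ENNReal.ofReal_mul' (abs_nonneg _)]
        exact ENNReal.ofReal_le_ofReal (hφ _ _)
    _ ≤ arcLength s γ := le_iSup_of_le n (le_iSup_of_le p (le_iSup_of_le hp le_rfl))

theorem length_of_full_flat_arc_general (s : ℝ) (hs₁ : Real.sqrt 2 < s)
    (γ : Set (Ihat s)) (hγ : IsFlatClosedArc s γ) (ℓ : ℕ)
    (hproj : (fun x : Ihat s => x.1 ℓ) '' γ = I) :
    ENNReal.ofReal (2 * s / (2 * s - 1) * s ^ ℓ) ≤ arcLength s γ := by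
  have hs : 1 < s := Real.one_lt_sqrt_two.trans hs₁
  obtain ⟨e⟩ := hγ.1
  let G : ℕ → Icc (0 : ℝ) 1 → ℝ := fun i t => (e.symm t).1.1 i
  have hG : Continuous (G ℓ) := (continuous_apply ℓ).comp
    (continuous_subtype_val.comp (continuous_subtype_val.comp e.symm.continuous))
  have hGℓ : 1 ≤ eVariationOn (G ℓ) univ := by
    obtain ⟨x, hx, hx₀⟩ : (0 : ℝ) ∈ (fun x : Ihat s => x.1 ℓ) '' γ :=
      hproj ▸ left_mem_Icc.2 zero_le_one
    obtain ⟨y, hy, hy₁⟩ : (1 : ℝ) ∈ (fun x : Ihat s => x.1 ℓ) '' γ :=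
      hproj ▸ right_mem_Icc.2 zero_le_one
    calc (1 : ℝ≥0∞) = edist (G ℓ (e ⟨y, hy⟩)) (G ℓ (e ⟨x, hx⟩)) := by
          simp [G, hx₀, hy₁]
      _ ≤ eVariationOn (G ℓ) univ := eVariationOn.edist_le _ (mem_univ _) (mem_univ _)
  have hG₀ : (f s)^[ℓ] ∘ G ℓ = G 0 := funext fun t => iterate_f_coord _ ℓ
  calc ENNReal.ofReal (2 * s / (2 * s - 1) * s ^ ℓ)
      = ENNReal.ofReal (2 * s / (2 * s - 1)) * (ENNReal.ofReal (s ^ ℓ) * 1) := by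
        rw [mul_one, ENNReal.ofReal_mul (div_nonneg (by linarith) (by linarith))]
    _ ≤ ENNReal.ofReal (2 * s / (2 * s - 1)) * eVariationOn (G 0) univ := by
        rw [← hG₀]
        gcongr
        refine le_trans ?_ (ofReal_pow_mul_eVariationOn_le_iterate_f_comp
          (by linarith) ordConnected_univ hG.continuousOn ℓ)
        gcongr
    _ ≤ arcLength s γ :=
        ofReal_mul_eVariationOn_le_arcLength e (φ := fun x => x.1 0)
          (mul_abs_sub_coord_zero_le_dHat (by linarith))

/-- if `γ` is a flat closed arc with `π_ℓ(γ) = I`, then the length of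
`γ` is at least `(2s/(2s−1))·s^ℓ`. -/
theorem length_of_full_flat_arc (s : ℝ) (hs₁ : Real.sqrt 2 < s) (hs₂ : s < 2)
    (γ : Set (Ihat s)) (hγ : IsFlatClosedArc s γ) (ℓ : ℕ)
    (hproj : (fun x : Ihat s => x.1 ℓ) '' γ = I) :
    ENNReal.ofReal (2 * s / (2 * s - 1) * s ^ ℓ) ≤ arcLength s γ :=
  length_of_full_flat_arc_general s hs₁ γ hγ ℓ hproj

end Tent
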